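/- Let a, b be nonzero real numbers, let t ∈ (0,1), and set s := √(t(1−t)). In M₂(ℂ), let A := [[1,0],[0,0]] and B := [[t,s],[s,1−t]], and let C ∈ M₂(ℂ) be a projection (C* = C, C² = C) such that A commutes with aB + bC and B commutes with aA + C. Then necessarily t = (b² + 2a²b − a²b² − a²)/(4a²b). -/

import Mathlib

/-!
Commuting with `A = diag(1, 0)` forces `aB + bC` to be diagonal, so both off-diagonal entries
of `C` equal `-as/b ≠ 0`. A `2 × 2` idempotent with a nonzero off-diagonal entry has trace `1`
and determinant `0`. The `(0, 1)` entry of `B (aA + C) = (aA + C) B` then determines `C₀₀`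
linearly, and `det C = 0`, i.e. `b² C₀₀ (1 - C₀₀) = a² s² = a² t (1 - t)`, turns into the
stated linear equation for `t`.
-/

namespace Matrix

variable {R : Type*}

theorem commute_diag_one_zero_iff [Ring R] (X : Matrix (Fin 2) (Fin 2) R) :
    Commute !![1, 0; 0, 0] X ↔ X 0 1 = 0 ∧ X 1 0 = 0 := by
  rw [X.eta_fin_two, Commute, SemiconjBy, mul_fin_two, mul_fin_two]
  simp [eq_comm]

theorem trace_eq_one_and_det_eq_zero_of_mul_self [CommRing R] [NoZeroDivisors R]
    {C : Matrix (Fin 2) (Fin 2) R} (hC : C * C = C) (h01 : C 0 1 ≠ 0) :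
    C.trace = 1 ∧ C.det = 0 := by
  have e00 := congr_fun₂ hC 0 0
  have e01 := congr_fun₂ hC 0 1
  simp only [mul_apply, Fin.sum_univ_two] at e00 e01
  have htr : C 0 0 + C 1 1 = 1 := by
    have : (C 0 0 + C 1 1 - 1) * C 0 1 = 0 := by linear_combination e01
    linear_combination (mul_eq_zero.1 this).resolve_right h01
  rw [trace_fin_two, det_fin_two]
  exact ⟨htr, by linear_combination C 0 0 * htr - e00⟩

end Matrix

open Matrix

theorem stmt17_general (a b : ℝ) (ha : a ≠ 0) (hb : b ≠ 0)
    (t : ℝ) (ht : t ∈ Set.Ioo (0 : ℝ) 1)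
    (s : ℝ) (hs : s = Real.sqrt (t * (1 - t)))
    (C : Matrix (Fin 2) (Fin 2) ℂ) (hCidem : C * C = C)
    (hcommA : Commute (!![1, 0; 0, 0] : Matrix (Fin 2) (Fin 2) ℂ)
      ((a : ℂ) • (!![(t : ℂ), (s : ℂ); (s : ℂ), 1 - (t : ℂ)]) + (b : ℂ) • C))
    (hcommB : Commute (!![(t : ℂ), (s : ℂ); (s : ℂ), 1 - (t : ℂ)])
      ((a : ℂ) • (!![1, 0; 0, 0] : Matrix (Fin 2) (Fin 2) ℂ) + C)) :
    t = (b ^ 2 + 2 * a ^ 2 * b - a ^ 2 * b ^ 2 - a ^ 2) / (4 * a ^ 2 * b) := by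
  obtain ⟨ht0, ht1⟩ := ht
  have hs2 : (s : ℂ) ^ 2 = t * (1 - t) := by
    exact_mod_cast hs ▸ Real.sq_sqrt (by nlinarith)
  have hs0 : (s : ℂ) ≠ 0 := by
    exact_mod_cast (hs ▸ Real.sqrt_pos.2 (by nlinarith) : 0 < s).ne'
  obtain ⟨hA01, hA10⟩ := (commute_diag_one_zero_iff _).1 hcommA
  replace hA01 : (a * s + b * C 0 1 : ℂ) = 0 := by simpa using hA01
  replace hA10 : (a * s + b * C 1 0 : ℂ) = 0 := by simpa using hA10
  have hB01 : (t * C 0 1 + s * C 1 1 : ℂ) = (a + C 0 0) * s + C 0 1 * (1 - t) := by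
    simpa [mul_apply, Fin.sum_univ_two] using congr_fun₂ hcommB.eq 0 1
  have hC01 : C 0 1 ≠ 0 := fun h => by simp [h, ha, hs0] at hA01
  obtain ⟨htr, hdet⟩ := trace_eq_one_and_det_eq_zero_of_mul_self hCidem hC01
  simp only [trace_fin_two, det_fin_two] at htr hdet
  have hC00 : 2 * b * C 0 0 = b * (1 - a) + a * (1 - 2 * t) := mul_left_cancel₀ hs0 <| by
    linear_combination -b * hB01 + (2 * t - 1) * hA01 + s * b * htr
  have hquad : (b : ℂ) ^ 2 * (C 0 0 * (1 - C 0 0)) = a ^ 2 * (t * (1 - t)) := by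
    linear_combination b ^ 2 * hdet - b ^ 2 * C 0 0 * htr + b * C 1 0 * hA01 - a * s * hA10
      + a ^ 2 * hs2
  have key : (t * (4 * a ^ 2 * b) : ℂ) = b ^ 2 + 2 * a ^ 2 * b - a ^ 2 * b ^ 2 - a ^ 2 := by
    linear_combination
      -4 * hquad + (2 * b - 2 * b * C 0 0 - (b * (1 - a) + a * (1 - 2 * t))) * hC00
  rw [eq_div_iff (by simp [ha, hb])]
  exact_mod_cast key

/-- for nonzero reals a, b, t ∈ (0,1), s = √(t(1−t)),
A = [[1,0],[0,0]], B = [[t,s],[s,1−t]] in M₂(ℂ), and a projection C such that A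
commutes with aB + bC and B commutes with aA + C, necessarily
t = (b² + 2a²b − a²b² − a²)/(4a²b). -/
theorem stmt17 (a b : ℝ) (ha : a ≠ 0) (hb : b ≠ 0)
    (t : ℝ) (ht : t ∈ Set.Ioo (0 : ℝ) 1)
    (s : ℝ) (hs : s = Real.sqrt (t * (1 - t)))
    (C : Matrix (Fin 2) (Fin 2) ℂ) (hCsa : star C = C) (hCidem : C * C = C)
    (hcommA : Commute (!![1, 0; 0, 0] : Matrix (Fin 2) (Fin 2) ℂ)
      ((a : ℂ) • (!![(t : ℂ), (s : ℂ); (s : ℂ), 1 - (t : ℂ)]) + (b : ℂ) • C))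
    (hcommB : Commute (!![(t : ℂ), (s : ℂ); (s : ℂ), 1 - (t : ℂ)])
      ((a : ℂ) • (!![1, 0; 0, 0] : Matrix (Fin 2) (Fin 2) ℂ) + C)) :
    t = (b ^ 2 + 2 * a ^ 2 * b - a ^ 2 * b ^ 2 - a ^ 2) / (4 * a ^ 2 * b) :=
  stmt17_general a b ha hb t ht s hs C hCidem hcommA hcommB
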